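/- Let x₁,…,xₙ be positive reals, not necessarily distinct, and S = {(±xᵢ,0),(0,±xᵢ)}. The Delaunay depth of the origin with respect to S equals n + 1 if and only if all the xᵢ are pairwise distinct. -/

import Mathlib

open Metric Set

noncomputable section

abbrev Pt : Type := EuclideanSpace ℝ (Fin 2)

def pt (a b : ℝ) : Pt := !₂[a, b]

/-- General position: no 3 collinear, no 4 cocircular. -/
def GenPos (S : Set Pt) : Prop :=
  (∀ T ⊆ S, T.ncard = 3 → ¬ Collinear ℝ T) ∧
  (∀ T ⊆ S, T.ncard = 4 → ¬ ∃ (c : Pt) (r : ℝ), ∀ p ∈ T, dist p c = r)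

/-- An empty circle through `p` and `q` witnessing Delaunay adjacency. -/
def EmptyCircle (S : Set Pt) (p q : Pt) : Prop :=
  ∃ (c : Pt) (r : ℝ), dist p c = r ∧ dist q c = r ∧
    ∀ s ∈ S, s ≠ p → s ≠ q → r < dist s c

/-- The Delaunay triangulation of `S` viewed as a graph on the plane
(vertices outside `S` are isolated). -/
def DelaunayGraph (S : Set Pt) : SimpleGraph Pt where
  Adj p q := p ≠ q ∧ p ∈ S ∧ q ∈ S ∧ EmptyCircle S p q
  symm := by
    constructor
    rintro p q ⟨hne, hp, hq, c, r, h1, h2, h3⟩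
    exact ⟨hne.symm, hq, hp, c, r, h2, h1, fun s hs h1' h2' => h3 s hs h2' h1'⟩
  loopless := ⟨fun p h => h.1 rfl⟩

/-- `p` is a vertex of the convex hull of `S`. -/
def HullVertex (S : Set Pt) (p : Pt) : Prop :=
  p ∈ S ∧ p ∉ convexHull ℝ (S \ {p})

/-- Delaunay depth of a point of `S`: one plus the graph distance in the
Delaunay triangulation to the set of convex-hull vertices. -/
def delaunayDepth (S : Set Pt) (p : Pt) : ℕ :=
  1 + sInf {d : ℕ | ∃ h : Pt, HullVertex S h ∧ (DelaunayGraph S).dist p h = d}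

/-- Delaunay depth of a query point `p` relative to `S`: its depth in `S ∪ {p}`. -/
def relDepth (S : Set Pt) (p : Pt) : ℕ := delaunayDepth (insert p S) p

/-- The segment corresponding to an (unordered) edge. -/
def edgeSeg (e : Sym2 Pt) : Set Pt :=
  Sym2.lift ⟨fun a b => segment ℝ a b, fun a b => segment_symm ℝ a b⟩ e

/-- The closed polygonal curve drawn by a closed walk of the graph. -/
def walkCurve {G : SimpleGraph Pt} {p : Pt} (w : G.Walk p p) : Set Pt :=
  ⋃ e ∈ w.edges, edgeSeg e

/-- `x` lies in the bounded open region enclosed by the curve. -/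
def InsideCurve (curve : Set Pt) (x : Pt) : Prop :=
  x ∉ curve ∧ Bornology.IsBounded (connectedComponentIn curveᶜ x)

/-- The element-uniqueness gadget: the four points `(±xᵢ,0), (0,±xᵢ)` for each `i`. -/
def gadget (n : ℕ) (x : Fin n → ℝ) : Set Pt :=
  ⋃ i : Fin n, {pt (x i) 0, pt (-(x i)) 0, pt 0 (x i), pt 0 (-(x i))}

/-!
Measure a point of `S ∪ {0}` by its level, the number of distinct `xᵢ` not exceeding its norm.
A circle through two points whose levels differ by at least two, with no other point inside,
cannot exist: by the power of the origin it would contain the intermediate point on one of the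
two rays, or the origin. So Delaunay edges change the level by at most one, while consecutive
points of a ray are joined through the circle on their diameter; the graph distance from the
origin is therefore exactly the level. A point below the outer ring lies on a segment between two
other points, so every hull vertex has the top level, and the depth of the origin is one plus the
number of distinct `xᵢ`. The argument only needs the directions to be finitely many unit vectors
closed under negation.
-/

open scoped RealInnerProductSpace

section RayGeometry

variable {E : Type*} [NormedAddCommGroup E] [InnerProductSpace ℝ E]

lemma norm_smul_of_norm_eq_one {d : E} (hd : ‖d‖ = 1) {t : ℝ} (ht : 0 ≤ t) : ‖t • d‖ = t := by
  rw [norm_smul, hd, mul_one, Real.norm_of_nonneg ht]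

lemma smul_ne_smul_of_norm_eq_one {d d' : E} (hd : ‖d‖ = 1) (hd' : ‖d'‖ = 1) {s t : ℝ}
    (hs : 0 ≤ s) (ht : 0 ≤ t) (hst : s ≠ t) : s • d ≠ t • d' := fun h => hst <| by
  simpa [norm_smul_of_norm_eq_one hd hs, norm_smul_of_norm_eq_one hd' ht] using congrArg norm h

lemma dist_smul_sq_of_norm_eq_one {d : E} (hd : ‖d‖ = 1) (t : ℝ) (c : E) :
    dist (t • d) c ^ 2 = t ^ 2 - 2 * t * ⟪d, c⟫ + ‖c‖ ^ 2 := by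
  rw [dist_eq_norm, norm_sub_sq_real, norm_smul, real_inner_smul_left, hd, Real.norm_eq_abs,
    mul_one, sq_abs]
  ring

/-- Writing `f = ‖c‖² - r²` for the power of the origin, the circle meets the ray of `d` in `u`
and `f / u`, and that of `d'` in `w` and `f / w`; as `m • d` and `m • d'` lie outside the circle,
`m * w < f < m * u`, which contradicts `u < w`. -/
lemma false_of_empty_circle_across {d d' c : E} {r u m w : ℝ} (hd : ‖d‖ = 1) (hd' : ‖d'‖ = 1)
    (hu : 0 ≤ u) (hum : u < m) (hmw : m < w)
    (hp : dist (u • d) c = r) (hq : dist (w • d') c = r)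
    (h0 : 0 < u → r < dist 0 c) (h1 : r < dist (m • d) c) (h2 : r < dist (m • d') c) :
    False := by
  have hr : 0 ≤ r := hp ▸ dist_nonneg
  have sq_lt {s : E} (h : r < dist s c) : r ^ 2 < dist s c ^ 2 := by gcongr
  have hp' := dist_smul_sq_of_norm_eq_one hd u c
  have hq' := dist_smul_sq_of_norm_eq_one hd' w c
  have h1' := (sq_lt h1).trans_eq (dist_smul_sq_of_norm_eq_one hd m c)
  have h2' := (sq_lt h2).trans_eq (dist_smul_sq_of_norm_eq_one hd' m c)
  rw [hp] at hp'
  rw [hq] at hq'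
  rcases hu.eq_or_lt with rfl | hu
  · have hb : w = 2 * ⟪d', c⟫ := by
      have : w * (w - 2 * ⟪d', c⟫) = 0 := by linarith
      rcases mul_eq_zero.1 this with h | h <;> linarith
    nlinarith
  · have hf : r ^ 2 < ‖c‖ ^ 2 := by simpa using sq_lt (h0 hu)
    have hfu : ‖c‖ ^ 2 - r ^ 2 < m * u := by nlinarith
    have hfw : m * w < ‖c‖ ^ 2 - r ^ 2 := by nlinarith
    nlinarith

lemma lt_dist_smul_midpoint {d d' : E} {t u w : ℝ} (hd : ‖d‖ = 1) (hd' : ‖d'‖ = 1)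
    (ht : 0 ≤ t) (hu : 0 ≤ u) (huw : u < w) (hout : t ≤ u ∨ w ≤ t)
    (hp : t • d' ≠ u • d) (hq : t • d' ≠ w • d) :
    (w - u) / 2 < dist (t • d') (((u + w) / 2) • d) := by
  refine lt_of_pow_lt_pow_left₀ 2 dist_nonneg ?_
  rw [dist_smul_sq_of_norm_eq_one hd', real_inner_smul_right, norm_smul, hd, mul_one,
    Real.norm_of_nonneg (by linarith)]
  by_cases hdd : d' = d
  · subst hdd
    have htu : t ≠ u := fun h => hp (by rw [h])
    have htw : t ≠ w := fun h => hq (by rw [h])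
    rw [real_inner_self_eq_norm_sq, hd]
    rcases hout with h | h
    · nlinarith [lt_of_le_of_ne h htu]
    · nlinarith [lt_of_le_of_ne h htw.symm]
  · have hk : ⟪d', d⟫ < 1 := (inner_lt_one_iff_real_of_norm_eq_one hd' hd).2 hdd
    rcases ht.eq_or_lt with rfl | ht
    · have hu : 0 < u := hu.lt_of_ne fun h => hp (by simp [← h])
      nlinarith
    · have : 0 ≤ (t - u) * (t - w) := by rcases hout with h | h <;> nlinarith
      nlinarith [mul_pos (mul_pos ht (by linarith : 0 < u + w)) (sub_pos.2 hk)]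

end RayGeometry

section StarSet

variable {E : Type*} [NormedAddCommGroup E] [InnerProductSpace ℝ E]

def starSet (V : Set ℝ) (D : Set E) : Set E := image2 (· • ·) (insert 0 V) D

variable {V : Set ℝ} {D : Set E}

lemma zero_mem_starSet (hD : D.Nonempty) : (0 : E) ∈ starSet V D :=
  let ⟨d, hd⟩ := hD
  ⟨0, mem_insert _ _, d, hd, zero_smul ℝ d⟩

lemma smul_mem_starSet {t : ℝ} (ht : t ∈ insert 0 V) {d : E} (hd : d ∈ D) :
    t • d ∈ starSet V D :=
  mem_image2_of_mem ht hd

lemma nonneg_of_mem_insert_zero (hV : ∀ v ∈ V, 0 < v) {t : ℝ} (ht : t ∈ insert 0 V) : 0 ≤ t := by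
  rcases ht with rfl | ht
  exacts [le_rfl, (hV t ht).le]

lemma mem_convexHull_starSet_diff (hV : ∀ v ∈ V, 0 < v) (hD : ∀ d ∈ D, ‖d‖ = 1)
    (hneg : ∀ d ∈ D, -d ∈ D) {s : E} (hs : s ∈ starSet V D) {v : ℝ} (hv : v ∈ V)
    (hsv : ‖s‖ < v) : s ∈ convexHull ℝ (starSet V D \ {s}) := by
  obtain ⟨t, ht, d, hd, rfl⟩ := hs
  have hv0 := hV v hv
  have ht0 := nonneg_of_mem_insert_zero hV ht
  have hd1 := hD d hd
  rw [norm_smul_of_norm_eq_one hd1 ht0] at hsv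
  have hvS : v • d ∈ starSet V D \ {t • d} :=
    ⟨smul_mem_starSet (mem_insert_of_mem _ hv) hd,
      smul_ne_smul_of_norm_eq_one hd1 hd1 hv0.le ht0 hsv.ne'⟩
  rcases ht0.eq_or_lt with rfl | ht0
  · have hvS' : v • -d ∈ starSet V D \ {(0 : ℝ) • d} :=
      ⟨smul_mem_starSet (mem_insert_of_mem _ hv) (hneg d hd),
        smul_ne_smul_of_norm_eq_one (by rwa [norm_neg]) hd1 hv0.le le_rfl hv0.ne'⟩
    refine segment_subset_convexHull hvS hvS'
      ⟨1 / 2, 1 / 2, by norm_num, by norm_num, by norm_num, ?_⟩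
    simp [smul_neg]
  · have h0S : (0 : ℝ) • d ∈ starSet V D \ {t • d} :=
      ⟨smul_mem_starSet (mem_insert 0 V) hd,
        smul_ne_smul_of_norm_eq_one hd1 hd1 le_rfl ht0.le ht0.ne⟩
    refine segment_subset_convexHull h0S hvS
      ⟨1 - t / v, t / v, by rw [sub_nonneg, div_le_one hv0]; exact hsv.le,
        div_nonneg ht0.le hv0.le, by ring, ?_⟩
    rw [zero_smul, smul_zero, zero_add, smul_smul, div_mul_cancel₀ _ hv0.ne']

end StarSet

theorem Set.Finite.exists_notMem_convexHull_diff {E : Type*} [AddCommGroup E] [Module ℝ E]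
    [TopologicalSpace E] [T2Space E] [IsTopologicalAddGroup E] [ContinuousSMul ℝ E]
    [LocallyConvexSpace ℝ E] {S : Set E} (hS : S.Finite) (hne : S.Nonempty) :
    ∃ x ∈ S, x ∉ convexHull ℝ (S \ {x}) := by
  obtain ⟨x, hx⟩ := (hS.isCompact_convexHull ℝ).extremePoints_nonempty hne.convexHull
  refine ⟨x, extremePoints_convexHull_subset hx, fun h => ?_⟩
  rw [(convex_convexHull ℝ S).mem_extremePoints_iff_mem_sdiff_convexHull_sdiff] at hx
  exact hx.2 (convexHull_mono (sdiff_subset_sdiff_left (subset_convexHull ℝ S)) h)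

namespace SimpleGraph

variable {α : Type*} {G : SimpleGraph α}

lemma Walk.apply_le_apply_add_length (f : α → ℕ) (hf : ∀ a b, G.Adj a b → f b ≤ f a + 1)
    {a b : α} (w : G.Walk a b) : f b ≤ f a + w.length := by
  induction w with
  | nil => simp
  | cons h _ ih => have := hf _ _ h; rw [Walk.length_cons]; omega

lemma exists_walk_length_eq_of_descent (P : α → Prop) (f : α → ℕ) {a : α}
    (hbase : ∀ y, P y → f y = 0 → y = a)
    (hstep : ∀ y, P y → 0 < f y → ∃ z, P z ∧ G.Adj z y ∧ f z + 1 = f y)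
    {y : α} (hy : P y) : ∃ w : G.Walk a y, w.length = f y := by
  induction hk : f y generalizing y with
  | zero => obtain rfl := hbase y hy hk; exact ⟨Walk.nil, rfl⟩
  | succ k ih =>
    obtain ⟨z, hz, hzy, hfz⟩ := hstep y hy (by omega)
    obtain ⟨w, hw⟩ := ih hz (by omega)
    exact ⟨w.concat hzy, by rw [Walk.length_concat, hw]⟩

lemma dist_eq_of_descent (P : α → Prop) (f : α → ℕ) {a : α}
    (hf : ∀ a b, G.Adj a b → f b ≤ f a + 1) (ha : f a = 0)
    (hbase : ∀ y, P y → f y = 0 → y = a)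
    (hstep : ∀ y, P y → 0 < f y → ∃ z, P z ∧ G.Adj z y ∧ f z + 1 = f y)
    {y : α} (hy : P y) : G.dist a y = f y := by
  obtain ⟨w, hw⟩ := exists_walk_length_eq_of_descent P f hbase hstep hy
  obtain ⟨w', hw'⟩ := w.reachable.exists_walk_length_eq_dist
  have := w'.apply_le_apply_add_length f hf
  have := dist_le w
  omega

end SimpleGraph

section DelaunayStar

variable {V : Finset ℝ} {D : Set Pt}

def level (V : Finset ℝ) (s : Pt) : ℕ := (V.filter (· ≤ ‖s‖)).card

lemma level_smul (hV : ∀ v ∈ V, 0 < v) (hD : ∀ d ∈ D, ‖d‖ = 1) {t : ℝ}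
    (ht : t ∈ insert 0 (V : Set ℝ)) {d : Pt} (hd : d ∈ D) :
    level V (t • d) = (V.filter (· ≤ t)).card := by
  rw [level, norm_smul_of_norm_eq_one (hD d hd) (nonneg_of_mem_insert_zero hV ht)]

lemma level_le_succ_of_adj (hV : ∀ v ∈ V, 0 < v) (hD : ∀ d ∈ D, ‖d‖ = 1) {p q : Pt}
    (h : (DelaunayGraph (starSet V D)).Adj p q) :
    level V q ≤ level V p + 1 := by
  obtain ⟨-, ⟨u, hu, d, hd, rfl⟩, ⟨w, hw, d', hd', rfl⟩, c, r, hpc, hqc, hempty⟩ := h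
  have hu0 := nonneg_of_mem_insert_zero hV hu
  have hw0 := nonneg_of_mem_insert_zero hV hw
  rw [level_smul hV hD hu hd, level_smul hV hD hw hd']
  have hsub : V.filter (· ≤ w) ⊆ insert w (V.filter (· ≤ u)) := by
    intro v hv
    simp only [Finset.mem_filter, Finset.mem_insert] at hv ⊢
    by_contra! hskip
    have hv0 := hV v hv.1
    have huv := hskip.2 hv.1
    have hvw := lt_of_le_of_ne hv.2 hskip.1
    have hvS {e : Pt} (he : e ∈ D) : v • e ∈ starSet V D :=
      smul_mem_starSet (mem_insert_of_mem 0 (Finset.mem_coe.2 hv.1)) he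
    have hne {s t : ℝ} {e e' : Pt} (he : e ∈ D) (he' : e' ∈ D) (hs : 0 ≤ s) (ht : 0 ≤ t)
        (hst : s ≠ t) : s • e ≠ t • e' :=
      smul_ne_smul_of_norm_eq_one (hD e he) (hD e' he') hs ht hst
    have h0 (hu : 0 < u) : r < dist 0 c := by
      simpa using hempty ((0 : ℝ) • d) (smul_mem_starSet (mem_insert 0 _) hd)
        (hne hd hd le_rfl hu0 hu.ne) (hne hd hd' le_rfl hw0 (by linarith))
    exact false_of_empty_circle_across (hD d hd) (hD d' hd') hu0 huv hvw hpc hqc h0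
      (hempty _ (hvS hd) (hne hd hd hv0.le hu0 huv.ne') (hne hd hd' hv0.le hw0 hvw.ne))
      (hempty _ (hvS hd') (hne hd' hd hv0.le hu0 huv.ne') (hne hd' hd' hv0.le hw0 hvw.ne))
  exact (Finset.card_le_card hsub).trans (Finset.card_insert_le _ _)

lemma delaunayGraph_adj_smul_smul (hV : ∀ v ∈ V, 0 < v) (hD : ∀ d ∈ D, ‖d‖ = 1) {u w : ℝ}
    (hu : u ∈ insert 0 (V : Set ℝ)) (hw : w ∈ V) (huw : u < w) (hgap : ∀ t ∈ V, t ≤ u ∨ w ≤ t)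
    {d : Pt} (hd : d ∈ D) : (DelaunayGraph (starSet V D)).Adj (u • d) (w • d) := by
  have hu0 := nonneg_of_mem_insert_zero hV hu
  have hdist {t : ℝ} : dist (t • d) (((u + w) / 2) • d) = |t - (u + w) / 2| := by
    rw [dist_eq_norm, ← sub_smul, norm_smul, hD d hd, mul_one, Real.norm_eq_abs]
  refine ⟨smul_ne_smul_of_norm_eq_one (hD d hd) (hD d hd) hu0 (by linarith) huw.ne,
    smul_mem_starSet hu hd, smul_mem_starSet (mem_insert_of_mem _ hw) hd,
    ((u + w) / 2) • d, (w - u) / 2, ?_, ?_, ?_⟩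
  · rw [hdist, abs_of_neg (by linarith)]
    ring
  · rw [hdist, abs_of_pos (by linarith)]
    ring
  · rintro _ ⟨t, ht, d', hd', rfl⟩ hsu hsw
    refine lt_dist_smul_midpoint (hD d hd) (hD d' hd') (nonneg_of_mem_insert_zero hV ht) hu0 huw
      ?_ hsu hsw
    rcases ht with rfl | ht
    exacts [Or.inl hu0, hgap t ht]

lemma exists_adj_level_succ (hV : ∀ v ∈ V, 0 < v) (hD : ∀ d ∈ D, ‖d‖ = 1) {s : Pt}
    (hs : s ∈ starSet V D) (hlevel : 0 < level V s) :
    ∃ z ∈ starSet V D, (DelaunayGraph (starSet V D)).Adj z s ∧ level V z + 1 = level V s := by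
  obtain ⟨t, ht, d, hd, rfl⟩ := hs
  rw [level_smul hV hD ht hd] at hlevel ⊢
  obtain ⟨v, hv⟩ := Finset.card_pos.1 hlevel
  have htV : t ∈ V := by
    rcases ht with rfl | ht
    · simp only [Finset.mem_filter] at hv
      exact absurd hv.2 (hV v hv.1).not_ge
    · exact ht
  set u := (insert 0 (V.filter (· < t))).max' (Finset.insert_nonempty _ _)
  have hle (v : ℝ) (hv : v ∈ V) (hvt : v < t) : v ≤ u :=
    Finset.le_max' _ _ (Finset.mem_insert_of_mem (Finset.mem_filter.2 ⟨hv, hvt⟩))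
  have hu : u ∈ insert 0 (V.filter (· < t)) := Finset.max'_mem _ _
  have huV : u ∈ insert 0 (V : Set ℝ) := by
    rcases Finset.mem_insert.1 hu with h | h
    exacts [Or.inl h, Or.inr (Finset.mem_filter.1 h).1]
  have hut : u < t := by
    rcases Finset.mem_insert.1 hu with h | h
    exacts [h ▸ hV t htV, (Finset.mem_filter.1 h).2]
  refine ⟨u • d, smul_mem_starSet huV hd,
    delaunayGraph_adj_smul_smul hV hD huV htV hut
      (fun v hv => (lt_or_ge v t).imp_left (hle v hv)) hd, ?_⟩
  have hfilter : V.filter (· ≤ t) = insert t (V.filter (· ≤ u)) := by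
    ext v
    simp only [Finset.mem_filter, Finset.mem_insert]
    constructor
    · rintro ⟨hv, hvt⟩
      rcases hvt.lt_or_eq with hvt | rfl
      exacts [Or.inr ⟨hv, hle v hv hvt⟩, Or.inl rfl]
    · rintro (rfl | ⟨hv, hvu⟩)
      exacts [⟨htV, le_rfl⟩, ⟨hv, hvu.trans hut.le⟩]
  rw [level_smul hV hD huV hd, hfilter, Finset.card_insert_of_notMem]
  simp [hut.not_ge]

lemma level_zero (hV : ∀ v ∈ V, 0 < v) : level V 0 = 0 := by
  simpa [level] using fun v hv => hV v hv

lemma eq_zero_of_level_eq_zero (hV : ∀ v ∈ V, 0 < v) (hD : ∀ d ∈ D, ‖d‖ = 1) {s : Pt}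
    (hs : s ∈ starSet V D) (hlevel : level V s = 0) : s = 0 := by
  obtain ⟨t, ht, d, hd, rfl⟩ := hs
  rcases ht with rfl | ht
  · exact zero_smul ℝ d
  · rw [level_smul hV hD (mem_insert_of_mem _ ht) hd, Finset.card_eq_zero,
      Finset.filter_eq_empty_iff] at hlevel
    exact absurd le_rfl (hlevel ht)

lemma dist_zero_eq_level (hV : ∀ v ∈ V, 0 < v) (hD : ∀ d ∈ D, ‖d‖ = 1) {s : Pt}
    (hs : s ∈ starSet V D) : (DelaunayGraph (starSet V D)).dist 0 s = level V s :=
  SimpleGraph.dist_eq_of_descent (· ∈ starSet V D) (level V)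
    (fun _ _ => level_le_succ_of_adj hV hD) (level_zero hV)
    (fun _ => eq_zero_of_level_eq_zero hV hD) (fun _ => exists_adj_level_succ hV hD) hs

lemma level_eq_card_of_hullVertex (hV : ∀ v ∈ V, 0 < v) (hD : ∀ d ∈ D, ‖d‖ = 1)
    (hneg : ∀ d ∈ D, -d ∈ D) {h : Pt} (hh : HullVertex (starSet V D) h) : level V h = V.card := by
  rw [level, Finset.filter_true_of_mem]
  intro v hv
  by_contra! hlt
  exact hh.2 (mem_convexHull_starSet_diff hV hD hneg hh.1 hv hlt)

theorem delaunayDepth_starSet (hV : ∀ v ∈ V, 0 < v) (hD : ∀ d ∈ D, ‖d‖ = 1)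
    (hneg : ∀ d ∈ D, -d ∈ D) (hfin : D.Finite) (hne : D.Nonempty) :
    delaunayDepth (starSet V D) 0 = V.card + 1 := by
  obtain ⟨h, hhS, hh⟩ := (((V.finite_toSet.insert 0).image2 _ hfin)).exists_notMem_convexHull_diff
    ⟨0, zero_mem_starSet hne⟩
  have hdists : {k : ℕ | ∃ h, HullVertex (starSet V D) h ∧
      (DelaunayGraph (starSet V D)).dist 0 h = k} = {V.card} := by
    ext k
    constructor
    · rintro ⟨h, hh, rfl⟩
      rw [dist_zero_eq_level hV hD hh.1, level_eq_card_of_hullVertex hV hD hneg hh]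
      rfl
    · rintro rfl
      exact ⟨h, ⟨hhS, hh⟩, by
        rw [dist_zero_eq_level hV hD hhS, level_eq_card_of_hullVertex hV hD hneg ⟨hhS, hh⟩]⟩
  rw [delaunayDepth, hdists, csInf_singleton, add_comm]

end DelaunayStar

section Gadget

lemma pt_zero_zero : pt 0 0 = 0 := by
  ext i; fin_cases i <;> simp [pt]

lemma smul_pt (c a b : ℝ) : c • pt a b = pt (c * a) (c * b) := by
  ext i; fin_cases i <;> simp [pt]

lemma neg_pt (a b : ℝ) : -pt a b = pt (-a) (-b) := by
  ext i; fin_cases i <;> simp [pt]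

def axisDirs : Set Pt := {pt 1 0, pt (-1) 0, pt 0 1, pt 0 (-1)}

lemma norm_eq_one_of_mem_axisDirs {d : Pt} (hd : d ∈ axisDirs) : ‖d‖ = 1 := by
  rcases hd with rfl | rfl | rfl | rfl <;> simp [pt, EuclideanSpace.norm_eq]

lemma neg_mem_axisDirs {d : Pt} (hd : d ∈ axisDirs) : -d ∈ axisDirs := by
  rcases hd with rfl | rfl | rfl | rfl <;> simp [axisDirs, neg_pt]

lemma insert_zero_gadget (n : ℕ) (x : Fin n → ℝ) :
    insert (pt 0 0) (gadget n x) = starSet (Finset.univ.image x : Set ℝ) axisDirs := by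
  ext s
  simp only [gadget, starSet, axisDirs, Finset.coe_image, Finset.coe_univ, image_univ,
    mem_insert_iff, mem_iUnion, mem_singleton_iff, mem_image2, exists_eq_or_imp, exists_eq_left,
    exists_range_iff, smul_pt]
  simp only [mul_one, mul_zero, mul_neg, neg_zero, or_self, @eq_comm _ s]

end Gadget

/-- The Delaunay depth of the origin relative to the gadget set is `n + 1` iff
all the `xᵢ` are pairwise distinct. -/
theorem stmt8 (n : ℕ) (x : Fin n → ℝ) (hpos : ∀ i, 0 < x i) :
    relDepth (gadget n x) (pt 0 0) = n + 1 ↔ Function.Injective x := by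
  have hV : ∀ v ∈ Finset.univ.image x, 0 < v := by simpa using hpos
  rw [relDepth, insert_zero_gadget, pt_zero_zero,
    delaunayDepth_starSet hV (fun _ => norm_eq_one_of_mem_axisDirs) (fun _ => neg_mem_axisDirs)
      (by simp [axisDirs]) ⟨_, mem_insert _ _⟩, add_left_inj]
  simpa using Finset.card_image_iff (s := (Finset.univ : Finset (Fin n))) (f := x)
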